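/- arXiv:2211.15240 — 8 statements merged into one kernel-verified Lean document; each statement's English description precedes it below -/
import Mathlib

section
/- For every natural number k and every n ≥ 1, the constant term of (1+x_1)^k (1+x_2)^k ... (1+x_n)^k (1 + 1/(x_1 x_2 ... x_n))^k equals the sum over m from 0 to k of C(k,m)^{n+1}. -/
open Finset AddMonoidAlgebra

lemma sum_apply' {ι G : Type*} (s : Finset ι) (f : ι → AddMonoidAlgebra ℤ G) (a : G) :
    (∑ i ∈ s, f i).coeff a = ∑ i ∈ s, (f i).coeff a := by
  rw [AddMonoidAlgebra.coeff_sum, Finsupp.finset_sum_apply]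

lemma expand_pow {n : ℕ} (v : Fin n → ℤ) (k : ℕ) :
    ((1 + AddMonoidAlgebra.single v (1 : ℤ)) ^ k : AddMonoidAlgebra ℤ (Fin n → ℤ))
      = ∑ m ∈ Finset.range (k + 1), AddMonoidAlgebra.single (m • v) ((k.choose m : ℤ)) := by
  rw [add_comm, add_pow]
  refine Finset.sum_congr rfl fun m hm => ?_
  rw [one_pow, mul_one, AddMonoidAlgebra.single_pow]
  simp [AddMonoidAlgebra.natCast_def, AddMonoidAlgebra.single_mul_single]


/-- The constant term of `(1+x_1)^k (1+x_2)^k ⋯ (1+x_n)^k (1 + 1/(x_1⋯x_n))^k`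
equals `∑_{m=0}^k C(k,m)^{n+1}`.  Laurent polynomials in `n` variables are
modeled as `AddMonoidAlgebra ℤ (Fin n → ℤ)`, the monomial `x^v` being
`single v 1`, and the constant term is the coefficient at the zero exponent
vector. -/
theorem constant_term_powers_of_binomials (n : ℕ) (hn : 1 ≤ n) (k : ℕ) :
    (((∏ i : Fin n, (1 + AddMonoidAlgebra.single (Pi.single i (1 : ℤ)) (1 : ℤ)) ^ k) *
        (1 + AddMonoidAlgebra.single (fun _ : Fin n => (-1 : ℤ)) (1 : ℤ)) ^ k :
        AddMonoidAlgebra ℤ (Fin n → ℤ)).coeff : (Fin n → ℤ) →₀ ℤ) 0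
      = ∑ m ∈ Finset.range (k + 1), ((k.choose m : ℤ)) ^ (n + 1) := by
  simp only [expand_pow]
  rw [Finset.prod_univ_sum]
  rw [Finset.sum_mul_sum]
  simp only [AddMonoidAlgebra.prod_single, AddMonoidAlgebra.single_mul_single]
  show (Finset.sum _ _ : AddMonoidAlgebra ℤ (Fin n → ℤ)).coeff 0 = _
  simp only [sum_apply', AddMonoidAlgebra.coeff_single, Finsupp.single_apply]
  have h1 : ∀ (g : Fin n → ℕ) (j : Fin n),
      (∑ i : Fin n, g i • Pi.single i (1:ℤ)) j = (g j : ℤ) := by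
    intro g j
    rw [Finset.sum_apply]
    simp [Pi.single_apply]
  have hcond : ∀ (g : Fin n → ℕ) (m : ℕ),
      ((∑ i : Fin n, g i • Pi.single i (1:ℤ)) + m • fun _ : Fin n => (-1:ℤ)) = 0
        ↔ g = fun _ => m := by
    intro g m
    rw [funext_iff, funext_iff]
    refine forall_congr' fun j => ?_
    simp only [Pi.add_apply, Pi.smul_apply, Pi.zero_apply]
    rw [h1]
    simp only [nsmul_eq_mul, mul_neg_one]
    omega
  rw [Finset.sum_comm]
  refine Finset.sum_congr rfl fun m hm => ?_
  simp only [hcond]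
  rw [Finset.sum_ite_eq' (Fintype.piFinset fun _ => Finset.range (k+1)) (fun _ => m)]
  rw [if_pos (Fintype.mem_piFinset.mpr fun _ => hm)]
  simp [pow_succ]
end

section
/- The central binomial coefficients satisfy the Lucas property: for every prime p, every k ≥ 0 and every l with 0 ≤ l ≤ p−1, C(2(kp+l), kp+l) ≡ C(2k,k) · C(2l,l) (mod p). -/
/-- Lucas property for the central binomial coefficients: for every prime `p`,
`C(2(kp+l), kp+l) ≡ C(2k,k) · C(2l,l) (mod p)` whenever `0 ≤ l ≤ p-1`. -/
theorem centralBinom_lucas (p : ℕ) (hp : p.Prime) (k l : ℕ) (hl : l ≤ p - 1) :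
    (2 * (k * p + l)).choose (k * p + l) ≡ (2 * k).choose k * (2 * l).choose l [MOD p] := by
  haveI : Fact p.Prime := ⟨hp⟩
  have hp2 : 2 ≤ p := hp.two_le
  have hlp : l < p := by omega
  have key := Choose.choose_modEq_choose_mod_mul_choose_div_nat (p := p)
    (n := 2 * (k * p + l)) (k := k * p + l)
  have hm1 : (k * p + l) % p = l := by
    rw [add_comm, Nat.add_mul_mod_self_right, Nat.mod_eq_of_lt hlp]
  have hm2 : (k * p + l) / p = k := by
    rw [add_comm, Nat.add_mul_div_right _ _ (by omega), Nat.div_eq_of_lt hlp]; omega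
  rcases lt_or_ge (2 * l) p with h | h
  · have hn1 : (2 * (k * p + l)) % p = 2 * l := by
      have : 2 * (k * p + l) = 2 * l + (2 * k) * p := by ring
      rw [this, Nat.add_mul_mod_self_right, Nat.mod_eq_of_lt h]
    have hn2 : (2 * (k * p + l)) / p = 2 * k := by
      have : 2 * (k * p + l) = 2 * l + (2 * k) * p := by ring
      rw [this, Nat.add_mul_div_right _ _ (by omega), Nat.div_eq_of_lt h]; omega
    rw [hn1, hn2, hm1, hm2] at key
    exact key.trans (by rw [mul_comm])
  · have hn1 : (2 * (k * p + l)) % p = 2 * l - p := by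
      have : 2 * (k * p + l) = (2 * l - p) + (2 * k + 1) * p := by
        zify [h]; ring
      rw [this, Nat.add_mul_mod_self_right, Nat.mod_eq_of_lt (by omega)]
    have hz : (2 * l - p).choose l = 0 := Nat.choose_eq_zero_of_lt (by omega)
    rw [hn1, hm1, hz, zero_mul] at key
    have hdvd : p ∣ (2 * l).choose l := hp.dvd_choose hlp (by omega) h
    calc (2 * (k * p + l)).choose (k * p + l) ≡ 0 [MOD p] := key
      _ ≡ (2 * k).choose k * (2 * l).choose l [MOD p] := by
          symm
          exact (Nat.modEq_zero_iff_dvd).mpr (hdvd.mul_left _)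
end

section
/- The Franel numbers f_k = Σ_{m=0}^k C(k,m)^3 satisfy the Lucas property: for every prime p, every k ≥ 0 and every l with 0 ≤ l ≤ p−1, f_{kp+l} ≡ f_k · f_l (mod p). -/
/-- Lucas property for the Franel numbers `f_k = ∑_{m=0}^k C(k,m)^3`:
for every prime `p`, `f_{kp+l} ≡ f_k · f_l (mod p)` whenever `0 ≤ l ≤ p-1`. -/
theorem franel_lucas (p : ℕ) (hp : p.Prime) (k l : ℕ) (hl : l ≤ p - 1) :
    (∑ m ∈ Finset.range (k * p + l + 1), ((k * p + l).choose m) ^ 3)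
      ≡ (∑ m ∈ Finset.range (k + 1), (k.choose m) ^ 3) *
        (∑ m ∈ Finset.range (l + 1), (l.choose m) ^ 3) [MOD p] := by
  haveI : Fact p.Prime := ⟨hp⟩
  have hp0 : 0 < p := hp.pos
  have hlp : l < p := lt_of_le_of_lt hl (Nat.pred_lt hp0.ne')
  rw [← ZMod.natCast_eq_natCast_iff]
  push_cast
  -- Lucas's theorem specialized
  have lucas : ∀ m : ℕ, (((k * p + l).choose m : ℕ) : ZMod p)
      = ((l.choose (m % p) : ℕ) : ZMod p) * ((k.choose (m / p) : ℕ) : ZMod p) := by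
    intro m
    have h := (ZMod.natCast_eq_natCast_iff _ _ p).mpr
      (Choose.choose_modEq_choose_mod_mul_choose_div_nat (p := p) (n := k * p + l) (k := m))
    have hmod : (k * p + l) % p = l := by
      rw [Nat.add_mod, Nat.mul_mod_left, Nat.zero_add, Nat.mod_mod_of_dvd, Nat.mod_eq_of_lt hlp]
      exact dvd_rfl
    have hdiv : (k * p + l) / p = k := by
      rw [mul_comm, Nat.mul_add_div hp0, Nat.div_eq_of_lt hlp, add_zero]
    rw [hmod, hdiv] at h
    push_cast at h ⊢
    rw [h]
  -- extend LHS sum to range ((k+1) * p)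
  have hle : k * p + l + 1 ≤ (k + 1) * p := by nlinarith
  have hext : ∑ m ∈ Finset.range (k * p + l + 1), (((k * p + l).choose m : ℕ) : ZMod p) ^ 3
      = ∑ m ∈ Finset.range ((k + 1) * p), (((k * p + l).choose m : ℕ) : ZMod p) ^ 3 := by
    apply Finset.sum_subset
    · exact Finset.range_subset_range.mpr hle
    · intro m _ hm
      rw [Finset.mem_range, not_lt] at hm
      rw [Nat.choose_eq_zero_of_lt (by omega)]
      simp
  rw [hext]
  -- reindex
  have hre : ∑ m ∈ Finset.range ((k + 1) * p), (((k * p + l).choose m : ℕ) : ZMod p) ^ 3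
      = ∑ q ∈ Finset.range (k + 1) ×ˢ Finset.range p,
          ((k.choose q.1 : ℕ) : ZMod p) ^ 3 * ((l.choose q.2 : ℕ) : ZMod p) ^ 3 := by
    apply Finset.sum_nbij' (fun m => (m / p, m % p)) (fun q => q.1 * p + q.2)
    · intro m hm
      rw [Finset.mem_range] at hm
      simp only [Finset.mem_product, Finset.mem_range]
      exact ⟨Nat.div_lt_of_lt_mul (by linarith [hm]), Nat.mod_lt _ hp0⟩
    · intro q hq
      simp only [Finset.mem_product, Finset.mem_range] at hq
      rw [Finset.mem_range]
      calc q.1 * p + q.2 < q.1 * p + p := by omega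
        _ = (q.1 + 1) * p := by ring
        _ ≤ (k + 1) * p := Nat.mul_le_mul_right _ (by omega)
    · intro m _
      simpa [mul_comm] using Nat.div_add_mod m p
    · intro q hq
      simp only [Finset.mem_product, Finset.mem_range] at hq
      obtain ⟨a, b⟩ := q
      simp only [Prod.mk.injEq]
      constructor
      · rw [mul_comm, Nat.mul_add_div hp0, Nat.div_eq_of_lt hq.2, add_zero]
      · rw [mul_comm, Nat.mul_add_mod, Nat.mod_eq_of_lt hq.2]
    · intro m _
      rw [lucas m, mul_pow, mul_comm]
  have hshrink : ∑ b ∈ Finset.range p, ((l.choose b : ℕ) : ZMod p) ^ 3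
      = ∑ b ∈ Finset.range (l + 1), ((l.choose b : ℕ) : ZMod p) ^ 3 := by
    symm
    apply Finset.sum_subset (Finset.range_subset_range.mpr (by omega))
    intro b _ hb
    rw [Finset.mem_range, not_lt] at hb
    rw [Nat.choose_eq_zero_of_lt (by omega)]
    simp
  rw [hre, Finset.sum_product]
  simp_rw [← Finset.mul_sum]
  rw [← Finset.sum_mul, hshrink]
end

section
/- The Apéry numbers A_k = Σ_{m=0}^k C(k,m)^2 C(k+m,m)^2 satisfy the Lucas property: for every prime p, every k ≥ 0 and every l with 0 ≤ l ≤ p−1, A_{kp+l} ≡ A_k · A_l (mod p). -/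
section AperyAux

variable {p : ℕ} [Fact p.Prime]

/-- One step of Lucas's theorem, stated as an equality in `ZMod p`. -/
lemma lucas_digit {a b r i : ℕ} (hr : r < p) (hi : i < p) :
    (((a * p + r).choose (b * p + i) : ℕ) : ZMod p)
      = ((a.choose b : ℕ) : ZMod p) * ((r.choose i : ℕ) : ZMod p) := by
  have hp0 : 0 < p := (Fact.out : p.Prime).pos
  have h := Choose.choose_modEq_choose_mod_mul_choose_div_nat
    (p := p) (n := a * p + r) (k := b * p + i)
  have h1 : (a * p + r) % p = r := by
    rw [mul_comm, Nat.mul_add_mod, Nat.mod_eq_of_lt hr]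
  have h2 : (a * p + r) / p = a := by
    rw [mul_comm, Nat.mul_add_div hp0, Nat.div_eq_of_lt hr, Nat.add_zero]
  have h3 : (b * p + i) % p = i := by
    rw [mul_comm, Nat.mul_add_mod, Nat.mod_eq_of_lt hi]
  have h4 : (b * p + i) / p = b := by
    rw [mul_comm, Nat.mul_add_div hp0, Nat.div_eq_of_lt hi, Nat.add_zero]
  rw [h1, h2, h3, h4] at h
  have := (ZMod.natCast_eq_natCast_iff _ _ _).mpr h
  rw [this]
  push_cast
  ring

set_option linter.unusedSectionVars false in
/-- Splitting a sum over `range (N * p)` into a double sum. -/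
lemma sum_range_mul_split (N : ℕ) (f : ℕ → ZMod p) :
    ∑ m ∈ Finset.range (N * p), f m
      = ∑ j ∈ Finset.range N, ∑ i ∈ Finset.range p, f (j * p + i) := by
  induction N with
  | zero => simp
  | succ N ih =>
      rw [Nat.succ_mul, Finset.sum_range_add, ih, Finset.sum_range_succ]

end AperyAux

/-- Lucas property for the Apéry numbers
`A_k = ∑_{m=0}^k C(k,m)^2 C(k+m,m)^2`: for every prime `p`,
`A_{kp+l} ≡ A_k · A_l (mod p)` whenever `0 ≤ l ≤ p-1`. -/
theorem apery_lucas (p : ℕ) (hp : p.Prime) (k l : ℕ) (hl : l ≤ p - 1) :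
    (∑ m ∈ Finset.range (k * p + l + 1),
        ((k * p + l).choose m) ^ 2 * ((k * p + l + m).choose m) ^ 2)
      ≡ (∑ m ∈ Finset.range (k + 1), (k.choose m) ^ 2 * ((k + m).choose m) ^ 2) *
        (∑ m ∈ Finset.range (l + 1), (l.choose m) ^ 2 * ((l + m).choose m) ^ 2) [MOD p] := by
  haveI : Fact p.Prime := ⟨hp⟩
  have hp0 : 0 < p := hp.pos
  have hlp : l < p := by omega
  rw [← ZMod.natCast_eq_natCast_iff]
  push_cast
  -- Extend the LHS sum to `range ((k+1)*p)`; the extra terms vanish.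
  have hsub : Finset.range (k * p + l + 1) ⊆ Finset.range ((k + 1) * p) := by
    apply Finset.range_subset_range.mpr; nlinarith
  rw [Finset.sum_subset hsub (by
    intro m _ hm
    rw [Finset.mem_range, not_lt] at hm
    have : (k * p + l).choose m = 0 := Nat.choose_eq_zero_of_lt (by omega)
    simp [this])]
  rw [sum_range_mul_split]
  -- Extend the RHS inner sum to `range p`; extra terms vanish since `l.choose i = 0`.
  have hsub2 : Finset.range (l + 1) ⊆ Finset.range p := Finset.range_subset_range.mpr (by omega)
  rw [Finset.sum_subset hsub2 (by
    intro i _ hi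
    rw [Finset.mem_range, not_lt] at hi
    have : l.choose i = 0 := Nat.choose_eq_zero_of_lt (by omega)
    simp [this])]
  rw [Finset.sum_mul_sum]
  refine Finset.sum_congr rfl fun j hj => Finset.sum_congr rfl fun i hi => ?_
  rw [Finset.mem_range] at hj hi
  have h1 : (((k * p + l).choose (j * p + i) : ℕ) : ZMod p)
      = ((k.choose j : ℕ) : ZMod p) * ((l.choose i : ℕ) : ZMod p) :=
    lucas_digit hlp hi
  by_cases hli : l + i < p
  · have h2 : k * p + l + (j * p + i) = (k + j) * p + (l + i) := by ring
    have h3 : (((k * p + l + (j * p + i)).choose (j * p + i) : ℕ) : ZMod p)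
        = (((k + j).choose j : ℕ) : ZMod p) * (((l + i).choose i : ℕ) : ZMod p) := by
      rw [h2]; exact lucas_digit hli hi
    rw [h1, h3]; ring
  · -- carry case: both sides vanish
    push_neg at hli
    have hr : l + i - p < p := by omega
    have h2 : k * p + l + (j * p + i) = (k + j + 1) * p + (l + i - p) := by
      have : p ≤ l + i := hli
      nlinarith [Nat.sub_add_cancel this]
    have hz : (l + i - p).choose i = 0 := Nat.choose_eq_zero_of_lt (by omega)
    have h3 : (((k * p + l + (j * p + i)).choose (j * p + i) : ℕ) : ZMod p) = 0 := by
      rw [h2, lucas_digit hr hi, hz]; simp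
    have h4 : l + i = 1 * p + (l + i - p) := by omega
    have h5 : (((l + i).choose i : ℕ) : ZMod p) = 0 := by
      have h6 := lucas_digit (p := p) (a := 1) (b := 0) hr hi
      rw [zero_mul, zero_add] at h6
      rw [h4, h6, hz]
      simp
    rw [h3, h5]
    ring
end

section
/- Let μ ⊂ R^n be a bounded convex polytope with a finite set of proper faces removed, and let μ̄ denote its closure (the original polytope). Then for all positive integers a, b one has aμ + bμ̄ ⊆ (a+b)μ, where X + Y = {x + y : x ∈ X, y ∈ Y} and kX denotes the k-fold Minkowski sum of X with itself. -/
open Pointwise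

/-- The `k`-fold Minkowski sum `X + X + ⋯ + X` (`k` copies) of a set `X`. -/
def minkowskiPow {n : ℕ} (k : ℕ) (X : Set (Fin n → ℝ)) : Set (Fin n → ℝ) :=
  {y | ∃ f : Fin k → (Fin n → ℝ), (∀ i, f i ∈ X) ∧ y = ∑ i, f i}

/-- Let `μ̄ = C` be a bounded convex polytope in `ℝ^n` (the convex hull of a
finite set of points) and let `μ` be obtained from `C` by removing a finite set
of proper faces.  Then for all positive integers `a, b` one has
`aμ + bμ̄ ⊆ (a+b)μ`, where `+` is Minkowski sum and `kX` the `k`-fold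
Minkowski sum of `X`. -/
theorem face_removed_polytope_minkowski (n : ℕ) (V : Finset (Fin n → ℝ))
    (C : Set (Fin n → ℝ)) (hC : C = convexHull ℝ (V : Set (Fin n → ℝ)))
    (m : ℕ) (F : Fin m → Set (Fin n → ℝ))
    (hface : ∀ j, IsExposed ℝ C (F j)) (hproper : ∀ j, F j ≠ C)
    (μ : Set (Fin n → ℝ)) (hμ : μ = C \ ⋃ j, F j)
    (a b : ℕ) (ha : 0 < a) (hb : 0 < b) :
    minkowskiPow a μ + minkowskiPow b C ⊆ minkowskiPow (a + b) μ := by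
  have hCconv : Convex ℝ C := hC ▸ convex_convexHull ℝ _
  -- key step: a strict convex combination of a point of μ and a point of C is in μ
  have step : ∀ x ∈ μ, ∀ y ∈ C, ∀ t s : ℝ, 0 < t → 0 < s → t + s = 1 →
      t • x + s • y ∈ μ := by
    intro x hx y hyC t s ht hs hts
    rw [hμ] at hx ⊢
    refine ⟨hCconv hx.1 hyC ht.le hs.le hts, ?_⟩
    intro hmem
    rw [Set.mem_iUnion] at hmem
    obtain ⟨j, hj⟩ := hmem
    have hext := (hface j).isExtreme
    have := hext.2 hx.1 hyC hj ⟨t, s, ht, hs, hts, rfl⟩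
    exact hx.2 (Set.mem_iUnion.2 ⟨j, this⟩)
  have hμsub : μ ⊆ C := by rw [hμ]; exact Set.diff_subset
  have hμconv : Convex ℝ μ := by
    intro x hx y hy t s ht hs hts
    rcases ht.eq_or_lt with rfl | ht'
    · have : s = 1 := by linarith
      simpa [this] using hy
    · rcases hs.eq_or_lt with rfl | hs'
      · have : t = 1 := by linarith
        simpa [this] using hx
      · exact step x hx y (hμsub hy) t s ht' hs' hts
  rintro z ⟨u, ⟨f, hf, rfl⟩, v, ⟨g, hg, rfl⟩, rfl⟩
  have hane : (a : ℝ) ≠ 0 := Nat.cast_ne_zero.2 ha.ne'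
  have hbne : (b : ℝ) ≠ 0 := Nat.cast_ne_zero.2 hb.ne'
  have habpos : (0:ℝ) < (a : ℝ) + b := by positivity
  set p : Fin n → ℝ := (a : ℝ)⁻¹ • ∑ i, f i with hp
  set q : Fin n → ℝ := (b : ℝ)⁻¹ • ∑ i, g i with hq
  have hpμ : p ∈ μ := by
    rw [hp, Finset.smul_sum]
    exact hμconv.sum_mem (fun i _ => by positivity)
      (by simp [Finset.sum_const, hane]) (fun i _ => hf i)
  have hqC : q ∈ C := by
    rw [hq, Finset.smul_sum]
    exact hCconv.sum_mem (fun i _ => by positivity)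
      (by simp [Finset.sum_const, hbne]) (fun i _ => hg i)
  have hw : ((a:ℝ)/((a:ℝ)+b)) • p + ((b:ℝ)/((a:ℝ)+b)) • q ∈ μ :=
    step p hpμ q hqC _ _ (by positivity) (by positivity) (by field_simp)
  refine ⟨fun _ => ((a:ℝ)/((a:ℝ)+b)) • p + ((b:ℝ)/((a:ℝ)+b)) • q, fun _ => hw, ?_⟩
  have h1 : ∑ i, f i = (a : ℝ) • p := by rw [hp, smul_inv_smul₀ hane]
  have h2 : ∑ i, g i = (b : ℝ) • q := by rw [hq, smul_inv_smul₀ hbne]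
  have e1 : ((a:ℝ)+b) * ((a:ℝ)/((a:ℝ)+b)) = a := by field_simp
  have e2 : ((a:ℝ)+b) * ((b:ℝ)/((a:ℝ)+b)) = b := by field_simp
  have main : ∀ u v : Fin n → ℝ, (a+b) • (((a:ℝ)/((a:ℝ)+b)) • u + ((b:ℝ)/((a:ℝ)+b)) • v)
      = (a:ℝ) • u + (b:ℝ) • v := by
    intro u v
    rw [← Nat.cast_smul_eq_nsmul ℝ, Nat.cast_add, smul_add, smul_smul, smul_smul, e1, e2]
  rw [Finset.sum_const, Finset.card_univ, Fintype.card_fin, main p q, h1, h2]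
end

section
/- Lucas property from the functional congruence: if a sequence of integers (g_k) with g_0 = 1 satisfies, for a prime p, the power series congruence Σ_{k≥0} g_k t^k ≡ (Σ_{l=0}^{p−1} g_l t^l)(Σ_{m≥0} g_m t^{pm}) (mod p), then g_{pm+l} ≡ g_l g_m (mod p) for all m ≥ 0 and 0 ≤ l ≤ p−1, and consequently g_{k_s p^s + ... + k_1 p + k_0} ≡ g_{k_s} ... g_{k_1} g_{k_0} (mod p) for all digits 0 ≤ k_i ≤ p−1. -/
private lemma lucas_sum_eq (g : ℕ → ℤ) (p : ℕ) (hp : p.Prime) (m l : ℕ) (hl : l ≤ p - 1) :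
    (∑ l' ∈ Finset.range p,
      if l' ≤ p * m + l ∧ p ∣ (p * m + l - l') then g l' * g ((p * m + l - l') / p) else 0)
      = g l * g m := by
  have hp0 : 0 < p := hp.pos
  have hlp : l < p := lt_of_le_of_lt hl (Nat.pred_lt hp0.ne')
  rw [Finset.sum_eq_single_of_mem l (Finset.mem_range.mpr hlp)]
  · rw [if_pos ⟨Nat.le_add_left l (p * m), by simp⟩]
    congr 1
    simp [Nat.mul_div_cancel_left _ hp0]
  · intro b hb hbl
    rw [if_neg]
    rintro ⟨hble, hdvd⟩
    have hbp : b < p := Finset.mem_range.mp hb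
    have : b ≡ p * m + l [MOD p] := (Nat.modEq_iff_dvd' hble).mpr hdvd
    have hbl' : b ≡ l [MOD p] := by
      calc b ≡ p * m + l [MOD p] := this
        _ ≡ 0 * m + l [MOD p] := Nat.ModEq.add_right l (Nat.ModEq.mul_right m (Nat.modEq_zero_iff_dvd.mpr dvd_rfl))
        _ = l := by ring
    exact hbl ((Nat.ModEq.eq_of_lt_of_lt hbl' hbp hlp))

/-- Lucas property from the functional congruence: if an integer sequence
`(g_k)` with `g_0 = 1` satisfies, for a prime `p`, the coefficientwise power
series congruence
`∑_{k≥0} g_k t^k ≡ (∑_{l=0}^{p-1} g_l t^l)(∑_{m≥0} g_m t^{pm}) (mod p)`,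
then `g_{pm+l} ≡ g_l g_m (mod p)` for all `m ≥ 0` and `0 ≤ l ≤ p-1`, and
consequently `g_{k_s p^s + ⋯ + k_1 p + k_0} ≡ g_{k_s} ⋯ g_{k_1} g_{k_0}
(mod p)` for all digits `0 ≤ k_i ≤ p-1`. -/
theorem lucas_from_functional_congruence (g : ℕ → ℤ) (hg0 : g 0 = 1)
    (p : ℕ) (hp : p.Prime)
    (hF : ∀ N : ℕ, g N ≡
      (∑ l ∈ Finset.range p, if l ≤ N ∧ p ∣ (N - l) then g l * g ((N - l) / p) else 0)
      [ZMOD (p : ℤ)]) :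
    (∀ m l : ℕ, l ≤ p - 1 → g (p * m + l) ≡ g l * g m [ZMOD (p : ℤ)]) ∧
    (∀ s : ℕ, ∀ d : ℕ → ℕ, (∀ i, d i ≤ p - 1) →
      g (∑ i ∈ Finset.range (s + 1), d i * p ^ i) ≡
        ∏ i ∈ Finset.range (s + 1), g (d i) [ZMOD (p : ℤ)]) := by
  have part1 : ∀ m l : ℕ, l ≤ p - 1 → g (p * m + l) ≡ g l * g m [ZMOD (p : ℤ)] := by
    intro m l hl
    have := hF (p * m + l)
    rwa [lucas_sum_eq g p hp m l hl] at this
  refine ⟨part1, ?_⟩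
  intro s
  induction s with
  | zero => intro d _; simp
  | succ s ih =>
    intro d hd
    have hN : (∑ i ∈ Finset.range (s + 2), d i * p ^ i)
        = p * (∑ i ∈ Finset.range (s + 1), d (i + 1) * p ^ i) + d 0 := by
      rw [Finset.sum_range_succ', Finset.mul_sum]
      simp only [pow_zero, mul_one]
      congr 1
      apply Finset.sum_congr rfl
      intro i _
      ring
    rw [hN, Finset.prod_range_succ']
    calc g (p * (∑ i ∈ Finset.range (s + 1), d (i + 1) * p ^ i) + d 0)
        ≡ g (d 0) * g (∑ i ∈ Finset.range (s + 1), d (i + 1) * p ^ i) [ZMOD (p : ℤ)] :=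
          part1 _ _ (hd 0)
      _ ≡ g (d 0) * ∏ i ∈ Finset.range (s + 1), g (d (i + 1)) [ZMOD (p : ℤ)] :=
          Int.ModEq.mul_left _ (ih (fun i => d (i + 1)) (fun i => hd (i + 1)))
      _ = (∏ i ∈ Finset.range (s + 1), g (d (i + 1))) * g (d 0) := mul_comm _ _
end

section
/- Let P(x_1,...,x_n) be a polynomial over Z with constant term 1 and degree 1 in each variable, and expand 1/P(x) = Σ_{k ∈ Z_{≥0}^n} a_k x^k. Then for every prime p, every k ∈ Z_{≥0}^n and every l ∈ {0,1,...,p−1}^n, one has a_{pk+l} ≡ a_l · a_k (mod p). -/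
open MvPowerSeries

namespace MvLucasAux
open scoped Classical

variable {σ : Type*} {R : Type*} [CommRing R]

/-- p-dilation of a multivariate power series: `(D p F)(x) = F(x^p)`. -/
noncomputable def D (p : ℕ) (F : MvPowerSeries σ R) : MvPowerSeries σ R :=
  fun m => if ∀ i, p ∣ m i then F (m.mapRange (· / p) (Nat.zero_div p)) else 0

lemma coeff_D (p : ℕ) (F : MvPowerSeries σ R) (m : σ →₀ ℕ) :
    MvPowerSeries.coeff m (D p F) =
      if ∀ i, p ∣ m i then MvPowerSeries.coeff (m.mapRange (· / p) (Nat.zero_div p)) F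
      else 0 := rfl

lemma mapRange_smul {p : ℕ} (hp : 0 < p) (a : σ →₀ ℕ) :
    (p • a).mapRange (· / p) (Nat.zero_div p) = a := by
  ext i
  simp only [Finsupp.mapRange_apply, Finsupp.smul_apply, smul_eq_mul]
  exact Nat.mul_div_cancel_left _ hp

lemma smul_mapRange {p : ℕ} {m : σ →₀ ℕ} (h : ∀ i, p ∣ m i) :
    p • (m.mapRange (· / p) (Nat.zero_div p)) = m := by
  ext i
  simp only [Finsupp.mapRange_apply, Finsupp.smul_apply, smul_eq_mul]
  exact Nat.mul_div_cancel' (h i)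

lemma smul_inj {p : ℕ} (hp : 0 < p) {a b : σ →₀ ℕ} (h : p • a = p • b) : a = b := by
  ext i
  have := DFunLike.congr_fun h i
  simp only [Finsupp.smul_apply, smul_eq_mul] at this
  exact Nat.eq_of_mul_eq_mul_left hp this

lemma dvd_smul_apply (p : ℕ) (z : σ →₀ ℕ) (i : σ) : p ∣ (p • z) i := by
  rw [Finsupp.smul_apply, smul_eq_mul]
  exact dvd_mul_right p (z i)

lemma D_one {p : ℕ} (hp : 0 < p) : (D p 1 : MvPowerSeries σ R) = 1 := by
  ext m
  rw [coeff_D, MvPowerSeries.coeff_one, MvPowerSeries.coeff_one]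
  by_cases h : ∀ i, p ∣ m i
  · rw [if_pos h]
    by_cases hm : m = 0
    · subst hm
      simp
    · rw [if_neg hm, if_neg]
      intro h0
      apply hm
      rw [← smul_mapRange h, h0, smul_zero]
  · rw [if_neg h, if_neg]
    intro h0
    subst h0
    exact h fun i => by simp

lemma D_mul {p : ℕ} (hp : 0 < p) (F G : MvPowerSeries σ R) :
    D p F * D p G = D p (F * G) := by
  ext m
  rw [MvPowerSeries.coeff_mul, coeff_D]
  by_cases h : ∀ i, p ∣ m i
  · rw [if_pos h]
    set s := m.mapRange (· / p) (Nat.zero_div p) with hs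
    rw [MvPowerSeries.coeff_mul]
    have himg : ((Finset.HasAntidiagonal.antidiagonal s).image
        (fun y : (σ →₀ ℕ) × (σ →₀ ℕ) => (p • y.1, p • y.2))) ⊆ Finset.HasAntidiagonal.antidiagonal m := by
      intro x hx
      simp only [Finset.mem_image, Finset.HasAntidiagonal.mem_antidiagonal] at hx ⊢
      obtain ⟨y, hy, rfl⟩ := hx
      rw [← smul_add, hy, hs, smul_mapRange h]
    have h0 : ∀ x ∈ Finset.HasAntidiagonal.antidiagonal m,
        x ∉ ((Finset.HasAntidiagonal.antidiagonal s).image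
          (fun y : (σ →₀ ℕ) × (σ →₀ ℕ) => (p • y.1, p • y.2))) →
        MvPowerSeries.coeff x.1 (D p F) * MvPowerSeries.coeff x.2 (D p G) = 0 := by
      intro x hx hnx
      simp only [Finset.HasAntidiagonal.mem_antidiagonal] at hx
      by_cases h1 : ∀ i, p ∣ x.1 i
      · by_cases h2 : ∀ i, p ∣ x.2 i
        · exfalso
          apply hnx
          simp only [Finset.mem_image, Finset.HasAntidiagonal.mem_antidiagonal]
          refine ⟨(x.1.mapRange (· / p) (Nat.zero_div p),
            x.2.mapRange (· / p) (Nat.zero_div p)), ?_, ?_⟩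
          · apply smul_inj hp
            rw [smul_add, smul_mapRange h1, smul_mapRange h2, hx, hs, smul_mapRange h]
          · rw [smul_mapRange h1, smul_mapRange h2]
        · rw [coeff_D p G, if_neg h2, mul_zero]
      · rw [coeff_D p F, if_neg h1, zero_mul]
    have hinj : ∀ x ∈ Finset.HasAntidiagonal.antidiagonal s, ∀ y ∈ Finset.HasAntidiagonal.antidiagonal s,
        (fun y : (σ →₀ ℕ) × (σ →₀ ℕ) => (p • y.1, p • y.2)) x =
          (fun y : (σ →₀ ℕ) × (σ →₀ ℕ) => (p • y.1, p • y.2)) y → x = y := by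
      intro x _ y _ hxy
      have h1 := congrArg Prod.fst hxy
      have h2 := congrArg Prod.snd hxy
      simp only at h1 h2
      exact Prod.ext (smul_inj hp h1) (smul_inj hp h2)
    rw [← Finset.sum_subset himg h0, Finset.sum_image hinj]
    apply Finset.sum_congr rfl
    intro y _
    rw [coeff_D, coeff_D, if_pos (fun i => dvd_smul_apply p y.1 i),
      if_pos (fun i => dvd_smul_apply p y.2 i), mapRange_smul hp, mapRange_smul hp]
  · rw [if_neg h]
    apply Finset.sum_eq_zero
    intro x hx
    simp only [Finset.HasAntidiagonal.mem_antidiagonal] at hx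
    by_cases h1 : ∀ i, p ∣ x.1 i
    · by_cases h2 : ∀ i, p ∣ x.2 i
      · exact absurd (fun i => hx ▸ dvd_add (h1 i) (h2 i)) h
      · rw [coeff_D p G, if_neg h2, mul_zero]
    · rw [coeff_D p F, if_neg h1, zero_mul]

open MvPolynomial in
lemma expand_monomial' {p : ℕ} (hp : 0 < p) (d : σ →₀ ℕ) (r : R) :
    MvPolynomial.expand p (MvPolynomial.monomial d r) = MvPolynomial.monomial (p • d) r := by
  rw [MvPolynomial.expand_monomial, MvPolynomial.monomial_eq, Finsupp.prod]

open MvPolynomial in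
lemma coeff_expand' {p : ℕ} (hp : 0 < p) (f : MvPolynomial σ R) (m : σ →₀ ℕ) :
    (expand p f).coeff m =
      if ∀ i, p ∣ m i then f.coeff (m.mapRange (· / p) (Nat.zero_div p)) else 0 := by
  induction f using MvPolynomial.induction_on' with
  | monomial d r =>
    rw [expand_monomial' hp, MvPolynomial.coeff_monomial, MvPolynomial.coeff_monomial]
    by_cases h : ∀ i, p ∣ m i
    · rw [if_pos h]
      by_cases hd : p • d = m
      · rw [if_pos hd, if_pos]
        rw [← hd, mapRange_smul hp]
      · rw [if_neg hd, if_neg]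
        intro hc
        exact hd (by rw [hc, smul_mapRange h])
    · rw [if_neg h, if_neg]
      intro hc
      exact h fun i => hc ▸ dvd_smul_apply p d i
  | add f g hf hg =>
    rw [map_add, MvPolynomial.coeff_add, MvPolynomial.coeff_add, hf, hg]
    split <;> simp

open MvPolynomial in
lemma coe_expand {p : ℕ} (hp : 0 < p) (f : MvPolynomial σ R) :
    ((expand p f : MvPolynomial σ R) : MvPowerSeries σ R) = D p (f : MvPowerSeries σ R) := by
  ext m
  rw [MvPolynomial.coeff_coe, coeff_D, coeff_expand' hp, MvPolynomial.coeff_coe]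

lemma coe_map_powerSeries {S : Type*} [CommRing S] (f : R →+* S) (P : MvPolynomial σ R) :
    MvPowerSeries.map f (P : MvPowerSeries σ R) =
      ((MvPolynomial.map f P : MvPolynomial σ S) : MvPowerSeries σ S) := by
  ext m
  rw [MvPowerSeries.coeff_map, MvPolynomial.coeff_coe, MvPolynomial.coeff_coe,
    MvPolynomial.coeff_map]

open MvPolynomial in
lemma coeff_pow_eq_zero {q : ℕ} (f : MvPolynomial σ R) (hf : ∀ i, f.degreeOf i ≤ 1)
    {u : σ →₀ ℕ} {i : σ} (hu : q < u i) : (f ^ q).coeff u = 0 := by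
  have hdeg : (f ^ q).degreeOf i ≤ q := by
    calc (f ^ q).degreeOf i ≤ q * f.degreeOf i := degreeOf_pow_le i f q
    _ ≤ q * 1 := Nat.mul_le_mul_left q (hf i)
    _ = q := mul_one q
  rw [← MvPolynomial.notMem_support_iff]
  intro hmem
  have := MvPolynomial.monomial_le_degreeOf i hmem
  omega

end MvLucasAux

open MvLucasAux

/-- Multivariate Lucas property for power series coefficients of rational
functions: let `P ∈ ℤ[x_1,…,x_n]` have constant term `1` and degree at most `1`
in each variable, and expand `1/P = ∑_k a_k x^k` (i.e. `P·A = 1` for a power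
series `A` with coefficients `a_k`).  Then for every prime `p`, every
multi-index `k` and every `l ∈ {0,…,p-1}^n`, `a_{pk+l} ≡ a_l · a_k (mod p)`. -/
theorem mv_lucas_rational (n : ℕ) (P : MvPolynomial (Fin n) ℤ)
    (hP0 : MvPolynomial.coeff 0 P = 1) (hPdeg : ∀ i, P.degreeOf i ≤ 1)
    (A : MvPowerSeries (Fin n) ℤ) (hA : (P : MvPowerSeries (Fin n) ℤ) * A = 1)
    (p : ℕ) (hp : p.Prime) (k l : Fin n →₀ ℕ) (hl : ∀ i, l i ≤ p - 1) :
    MvPowerSeries.coeff (p • k + l) A ≡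
      MvPowerSeries.coeff l A * MvPowerSeries.coeff k A [ZMOD (p : ℤ)] := by
  haveI : Fact p.Prime := ⟨hp⟩
  set f := Int.castRingHom (ZMod p) with hf
  set Q := MvPolynomial.map f P with hQ
  set B := MvPowerSeries.map f A with hB
  have hQB : (Q : MvPowerSeries (Fin n) (ZMod p)) * B = 1 := by
    have h := congrArg (MvPowerSeries.map f) hA
    rw [map_mul, map_one, coe_map_powerSeries] at h
    exact h
  have hcoeB : ∀ m : Fin n →₀ ℕ,
      MvPowerSeries.coeff m B = ((MvPowerSeries.coeff m A : ℤ) : ZMod p) := by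
    intro m
    rw [hB, MvPowerSeries.coeff_map]
    rfl
  have hB0 : MvPowerSeries.coeff 0 B = 1 := by
    have h := congrArg (MvPowerSeries.constantCoeff) hQB
    rw [map_mul, map_one] at h
    have hQ0 : MvPowerSeries.constantCoeff (Q : MvPowerSeries (Fin n) (ZMod p))
        = 1 := by
      rw [← MvPowerSeries.coeff_zero_eq_constantCoeff_apply, MvPolynomial.coeff_coe, hQ,
        MvPolynomial.coeff_map, hP0, map_one]
    rw [hQ0, one_mul] at h
    rw [MvPowerSeries.coeff_zero_eq_constantCoeff_apply]
    exact h
  have hQp : ((Q ^ p : MvPolynomial (Fin n) (ZMod p)) : MvPowerSeries (Fin n) (ZMod p))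
      = D p (Q : MvPowerSeries (Fin n) (ZMod p)) := by
    rw [← MvPolynomial.expand_zmod, coe_expand hp.pos]
  have h1 : ((Q ^ p : MvPolynomial (Fin n) (ZMod p)) : MvPowerSeries (Fin n) (ZMod p))
      * D p B = 1 := by
    rw [hQp, D_mul hp.pos, hQB, D_one hp.pos]
  have hBid : B = ((Q ^ (p - 1) : MvPolynomial (Fin n) (ZMod p)) :
      MvPowerSeries (Fin n) (ZMod p)) * D p B := by
    have hpp : ((Q ^ p : MvPolynomial (Fin n) (ZMod p)) : MvPowerSeries (Fin n) (ZMod p))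
        = (Q : MvPowerSeries (Fin n) (ZMod p)) *
          ((Q ^ (p - 1) : MvPolynomial (Fin n) (ZMod p)) : MvPowerSeries (Fin n) (ZMod p)) := by
      rw [MvPolynomial.coe_pow, MvPolynomial.coe_pow, ← pow_sub_one_mul hp.pos.ne'
        ((Q : MvPowerSeries (Fin n) (ZMod p)))]
      ring
    calc B = B * (((Q ^ p : MvPolynomial (Fin n) (ZMod p)) :
          MvPowerSeries (Fin n) (ZMod p)) * D p B) := by rw [h1, mul_one]
      _ = ((Q : MvPowerSeries (Fin n) (ZMod p)) * B) *
          (((Q ^ (p - 1) : MvPolynomial (Fin n) (ZMod p)) :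
            MvPowerSeries (Fin n) (ZMod p)) * D p B) := by rw [hpp]; ring
      _ = ((Q ^ (p - 1) : MvPolynomial (Fin n) (ZMod p)) :
          MvPowerSeries (Fin n) (ZMod p)) * D p B := by rw [hQB, one_mul]
  have hvan : ∀ u : Fin n →₀ ℕ, (∃ i, p - 1 < u i) → (Q ^ (p - 1)).coeff u = 0 := by
    rintro u ⟨i, hi⟩
    rw [hQ, ← map_pow, MvPolynomial.coeff_map, coeff_pow_eq_zero P hPdeg hi, map_zero]
  have key : ∀ k' : Fin n →₀ ℕ, MvPowerSeries.coeff (p • k' + l) B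
      = (Q ^ (p - 1)).coeff l * MvPowerSeries.coeff k' B := by
    intro k'
    conv_lhs => rw [hBid]
    rw [MvPowerSeries.coeff_mul, Finset.sum_eq_single ((l, p • k') : (Fin n →₀ ℕ) × (Fin n →₀ ℕ))]
    · rw [MvPolynomial.coeff_coe, coeff_D, if_pos (fun i => dvd_smul_apply p k' i),
        mapRange_smul hp.pos]
    · intro b hb hbne
      rw [Finset.HasAntidiagonal.mem_antidiagonal] at hb
      by_cases h2 : ∀ i, p ∣ b.2 i
      · by_cases hb1 : ∀ i, b.1 i ≤ p - 1
        · exfalso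
          apply hbne
          set m := b.2.mapRange (· / p) (Nat.zero_div p) with hm
          have hb2 : b.2 = p • m := (smul_mapRange h2).symm
          have heq : ∀ i, b.1 i = l i ∧ m i = k' i := by
            intro i
            have hsum := DFunLike.congr_fun hb i
            rw [Finsupp.add_apply, Finsupp.add_apply, hb2, Finsupp.smul_apply,
              Finsupp.smul_apply, smul_eq_mul, smul_eq_mul] at hsum
            -- hsum : b.1 i + p * m i = p * k' i + l i
            have hblt : b.1 i < p := lt_of_le_of_lt (hb1 i) (Nat.sub_lt hp.pos one_pos)
            have hllt : l i < p := lt_of_le_of_lt (hl i) (Nat.sub_lt hp.pos one_pos)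
            have hmod : b.1 i % p = l i % p := by
              have := congrArg (· % p) hsum
              simpa [Nat.add_mul_mod_self_left, Nat.mul_add_mod] using this
            have hbl : b.1 i = l i := by
              rwa [Nat.mod_eq_of_lt hblt, Nat.mod_eq_of_lt hllt] at hmod
            refine ⟨hbl, ?_⟩
            rw [hbl, add_comm] at hsum
            have := Nat.add_right_cancel hsum
            exact Nat.eq_of_mul_eq_mul_left hp.pos this
          have hfst : b.1 = l := Finsupp.ext fun i => (heq i).1
          have hsnd : b.2 = p • k' := by
            rw [hb2]
            exact congrArg _ (Finsupp.ext fun i => (heq i).2)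
          exact Prod.ext hfst hsnd
        · push_neg at hb1
          obtain ⟨i, hi⟩ := hb1
          rw [MvPolynomial.coeff_coe, hvan b.1 ⟨i, hi⟩, zero_mul]
      · rw [coeff_D, if_neg h2, mul_zero]
    · intro hni
      exact absurd (Finset.HasAntidiagonal.mem_antidiagonal.mpr (add_comm l (p • k'))) hni
  have hcl : MvPowerSeries.coeff l B = (Q ^ (p - 1)).coeff l := by
    have h := key 0
    rw [smul_zero, zero_add, hB0, mul_one] at h
    exact h
  have hfinal : MvPowerSeries.coeff (p • k + l) B
      = MvPowerSeries.coeff l B * MvPowerSeries.coeff k B := by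
    rw [key k, hcl]
  rw [hcoeB, hcoeB, hcoeB] at hfinal
  have := (ZMod.intCast_eq_intCast_iff' (a := MvPowerSeries.coeff (p • k + l) A)
    (b := MvPowerSeries.coeff l A * MvPowerSeries.coeff k A) (c := p)).mp
  apply this
  push_cast
  exact hfinal
end

section
/- The diagonal coefficients of 1/(1 − x_1 − ... − x_n) are the multinomial numbers (kn)!/(k!)^n, i.e., the coefficient of (x_1 x_2 ... x_n)^k in the power series expansion of 1/(1 − x_1 − ... − x_n) equals (kn)!/(k!)^n, and consequently (by the multivariate Lucas property) for every prime p, writing m = kp + l with 0 ≤ l ≤ p−1: ((kp+l)n)!/((kp+l)!)^n ≡ ((kn)!/(k!)^n) · ((ln)!/(l!)^n) (mod p). -/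
open Finset Nat

section Aux

variable {n : ℕ}

lemma multinomial_key (f : Fin n → ℕ) (i : Fin n) (hi : 1 ≤ f i) :
    (∑ j, f j) * Nat.multinomial Finset.univ (Function.update f i (f i - 1))
      = f i * Nat.multinomial Finset.univ f := by
  classical
  set g := Function.update f i (f i - 1) with hg
  have hsum : ∑ j, g j = (∑ j, f j) - 1 := by
    rw [hg, Finset.sum_update_of_mem (Finset.mem_univ i)]
    have h2 := Finset.add_sum_erase Finset.univ f (Finset.mem_univ i)
    rw [Finset.erase_eq] at h2
    omega
  have hprod : (∏ j, (g j)!) * f i = ∏ j, (f j)! := by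
    rw [← Finset.mul_prod_erase Finset.univ (fun j => (g j)!) (Finset.mem_univ i),
      ← Finset.mul_prod_erase Finset.univ (fun j => (f j)!) (Finset.mem_univ i)]
    have h1 : ∀ j ∈ Finset.univ.erase i, (g j)! = (f j)! := by
      intro j hj
      rw [hg, Function.update_of_ne (Finset.ne_of_mem_erase hj)]
    rw [Finset.prod_congr rfl h1]
    have h2 : (g i)! * f i = (f i)! := by
      have h3 : g i = f i - 1 := by rw [hg, Function.update_self]
      have h4 : f i = (f i - 1) + 1 := by omega
      rw [h3]
      conv_rhs => rw [h4]
      rw [Nat.factorial_succ, ← h4]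
      ring
    calc (g i)! * (∏ j ∈ Finset.univ.erase i, (f j)!) * f i
        = ((g i)! * f i) * ∏ j ∈ Finset.univ.erase i, (f j)! := by ring
      _ = (f i)! * ∏ j ∈ Finset.univ.erase i, (f j)! := by rw [h2]
  have hpos : 1 ≤ ∑ j, f j :=
    le_trans hi (Finset.single_le_sum (fun j _ => Nat.zero_le _) (Finset.mem_univ i))
  have hfact : ((∑ j, f j) - 1)! * (∑ j, f j) = (∑ j, f j)! := by
    have h : (∑ j, f j) = ((∑ j, f j) - 1) + 1 := by omega
    conv_rhs => rw [h]
    rw [Nat.factorial_succ, ← h, mul_comm]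
  have H := Nat.multinomial_spec Finset.univ g
  have H2 := Nat.multinomial_spec Finset.univ f
  have hcancel : 0 < (∏ j, (g j)!) * f i :=
    Nat.mul_pos (Finset.prod_pos fun j _ => Nat.factorial_pos _) hi
  apply Nat.eq_of_mul_eq_mul_left hcancel
  calc (∏ j, (g j)!) * f i * ((∑ j, f j) * Nat.multinomial Finset.univ g)
      = f i * ((∑ j, f j) * ((∏ j, (g j)!) * Nat.multinomial Finset.univ g)) := by ring
    _ = f i * ((∑ j, f j) * ((∑ j, g j)!)) := by rw [H]
    _ = f i * ((∑ j, f j) * (((∑ j, f j) - 1)!)) := by rw [hsum]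
    _ = f i * (((∑ j, f j) - 1)! * (∑ j, f j)) := by ring
    _ = f i * ((∑ j, f j)!) := by rw [hfact]
    _ = f i * ((∏ j, (f j)!) * Nat.multinomial Finset.univ f) := by rw [H2]
    _ = f i * (((∏ j, (g j)!) * f i) * Nat.multinomial Finset.univ f) := by rw [hprod]
    _ = (∏ j, (g j)!) * f i * (f i * Nat.multinomial Finset.univ f) := by ring

lemma multinomial_pascal (f : Fin n → ℕ) (hf : ∃ i, 1 ≤ f i) :
    Nat.multinomial Finset.univ f
      = ∑ i ∈ Finset.univ.filter (fun i => 1 ≤ f i),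
          Nat.multinomial Finset.univ (Function.update f i (f i - 1)) := by
  classical
  obtain ⟨i0, hi0⟩ := hf
  have hpos : 0 < ∑ j, f j :=
    lt_of_lt_of_le hi0 (Finset.single_le_sum (fun j _ => Nat.zero_le _) (Finset.mem_univ i0))
  apply Nat.eq_of_mul_eq_mul_left hpos
  rw [Finset.mul_sum]
  calc (∑ j, f j) * Nat.multinomial Finset.univ f
      = (∑ i ∈ Finset.univ.filter (fun i => 1 ≤ f i), f i) * Nat.multinomial Finset.univ f := by
        congr 1
        rw [Finset.sum_filter]
        apply Finset.sum_congr rfl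
        intro j _
        by_cases h : 1 ≤ f j <;> simp [h] <;> omega
    _ = ∑ i ∈ Finset.univ.filter (fun i => 1 ≤ f i), f i * Nat.multinomial Finset.univ f := by
        rw [Finset.sum_mul]
    _ = ∑ i ∈ Finset.univ.filter (fun i => 1 ≤ f i),
          (∑ j, f j) * Nat.multinomial Finset.univ (Function.update f i (f i - 1)) := by
        apply Finset.sum_congr rfl
        intro j hj
        rw [Finset.mem_filter] at hj
        rw [multinomial_key f j hj.2]

/-- The candidate inverse power series with stride `q`. -/
noncomputable def Dser (n : ℕ) (R : Type*) [CommRing R] (q : ℕ) : MvPowerSeries (Fin n) R :=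
  fun m => if ∀ i, q ∣ m i then ((Nat.multinomial Finset.univ fun i => m i / q : ℕ) : R) else 0

lemma coeff_Dser {R : Type*} [CommRing R] (q : ℕ) (m : Fin n →₀ ℕ) :
    MvPowerSeries.coeff m (Dser n R q)
      = if ∀ i, q ∣ m i then ((Nat.multinomial Finset.univ fun i => m i / q : ℕ) : R) else 0 :=
  rfl

lemma coeff_X_pow_mul' {R : Type*} [CommRing R] (Φs : MvPowerSeries (Fin n) R) (i : Fin n)
    (q : ℕ) (m : Fin n →₀ ℕ) :
    MvPowerSeries.coeff m (MvPowerSeries.X i ^ q * Φs)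
      = if q ≤ m i then MvPowerSeries.coeff (m - Finsupp.single i q) Φs else 0 := by
  classical
  rw [MvPowerSeries.coeff_mul]
  split_ifs with h
  · rw [Finset.sum_eq_single (Finsupp.single i q, m - Finsupp.single i q)]
    · rw [MvPowerSeries.coeff_X_pow, if_pos rfl, one_mul]
    · rintro ⟨u, v⟩ huv hne
      rw [HasAntidiagonal.mem_antidiagonal] at huv
      rw [MvPowerSeries.coeff_X_pow]
      split_ifs with hu
      · exfalso
        apply hne
        subst hu
        have : v = m - Finsupp.single i q := by
          rw [← huv, add_tsub_cancel_left]
        rw [this]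
      · exact zero_mul _
    · intro hmem
      exfalso
      apply hmem
      rw [HasAntidiagonal.mem_antidiagonal]
      exact add_tsub_cancel_of_le (Finsupp.single_le_iff.mpr h)
  · apply Finset.sum_eq_zero
    rintro ⟨u, v⟩ huv
    rw [HasAntidiagonal.mem_antidiagonal] at huv
    rw [MvPowerSeries.coeff_X_pow, if_neg, zero_mul]
    rintro rfl
    apply h
    rw [← huv]
    simp

lemma Dser_inv (n : ℕ) (R : Type*) [CommRing R] (q : ℕ) (hq : 0 < q) :
    (1 - ∑ i : Fin n, MvPowerSeries.X i ^ q) * Dser n R q = 1 := by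
  classical
  ext m
  rw [sub_mul, one_mul, map_sub, Finset.sum_mul, map_sum]
  simp only [coeff_X_pow_mul']
  rw [MvPowerSeries.coeff_one]
  by_cases hm : m = 0
  · subst hm
    have h1 : (∀ i : Fin n, q ∣ (0 : Fin n →₀ ℕ) i) := by simp
    rw [coeff_Dser, if_pos h1]
    have h2 : (Nat.multinomial Finset.univ fun i : Fin n => (0 : Fin n →₀ ℕ) i / q) = 1 := by
      simp [Nat.multinomial]
    rw [h2]
    rw [Finset.sum_eq_zero, if_pos rfl]
    · simp
    · intro i _
      rw [if_neg]
      simp only [Finsupp.coe_zero, Pi.zero_apply]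
      omega
  · rw [if_neg hm]
    by_cases h : ∀ i, q ∣ m i
    · -- all coordinates divisible
      set f : Fin n → ℕ := fun j => m j / q with hf
      have hmq : ∀ j, m j = q * f j := fun j => (Nat.mul_div_cancel' (h j) ).symm
      have hexists : ∃ i, 1 ≤ f i := by
        obtain ⟨j, hj⟩ := Finsupp.ne_iff.mp hm
        refine ⟨j, ?_⟩
        have := hmq j
        simp only [Finsupp.coe_zero, Pi.zero_apply] at hj
        by_contra hc
        push_neg at hc
        interval_cases h : f j
        · omega
      have hDm : MvPowerSeries.coeff m (Dser n R q)
          = ((Nat.multinomial Finset.univ f : ℕ) : R) := by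
        rw [coeff_Dser, if_pos h]
      rw [hDm]
      have hterm : ∀ i : Fin n,
          (if q ≤ m i then MvPowerSeries.coeff (m - Finsupp.single i q) (Dser n R q) else 0)
            = if 1 ≤ f i then
                ((Nat.multinomial Finset.univ (Function.update f i (f i - 1)) : ℕ) : R) else 0 := by
        intro i
        by_cases hqi : q ≤ m i
        · have hfi : 1 ≤ f i := (Nat.one_le_div_iff hq).mpr hqi
          rw [if_pos hqi, if_pos hfi]
          have hdvd : ∀ j, q ∣ (m - Finsupp.single i q) j := by
            intro j
            rw [Finsupp.tsub_apply]
            by_cases hji : j = i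
            · subst hji
              simp only [Finsupp.single_eq_same]
              exact Nat.dvd_sub (h j) dvd_rfl
            · rw [Finsupp.single_eq_of_ne hji]
              simpa using h j
          rw [coeff_Dser, if_pos hdvd]
          congr 1
          apply congrArg
          funext j
          rw [Finsupp.tsub_apply]
          by_cases hji : j = i
          · subst hji
            simp only [Finsupp.single_eq_same, Function.update_self]
            obtain ⟨t, ht⟩ := h j
            have ht1 : 1 ≤ t := by
              by_contra hc
              push_neg at hc
              interval_cases t <;> omega
            obtain ⟨s, rfl⟩ : ∃ s, t = s + 1 := ⟨t - 1, by omega⟩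
            rw [ht]
            have h1 : q * (s + 1) - q = q * s := by ring_nf; omega
            rw [h1, Nat.mul_div_cancel_left _ hq]
            have h2 : f j = s + 1 := by rw [hf]; simp [ht, Nat.mul_div_cancel_left _ hq]
            omega
          · rw [Finsupp.single_eq_of_ne hji, Nat.sub_zero,
              Function.update_of_ne hji]
        · have hfi : ¬ 1 ≤ f i := by
            rw [Nat.one_le_div_iff hq]; exact hqi
          rw [if_neg hqi, if_neg hfi]
      rw [Finset.sum_congr rfl (fun i _ => hterm i)]
      rw [← Finset.sum_filter]
      rw [← Nat.cast_sum]
      rw [sub_eq_zero]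
      exact_mod_cast congrArg _ (multinomial_pascal f hexists)
    · -- some coordinate not divisible
      push_neg at h
      obtain ⟨j0, hj0⟩ := h
      have hDm : MvPowerSeries.coeff m (Dser n R q) = 0 := by
        rw [coeff_Dser, if_neg]
        push_neg
        exact ⟨j0, hj0⟩
      rw [hDm]
      rw [Finset.sum_eq_zero]
      · simp
      · intro i _
        by_cases hqi : q ≤ m i
        · rw [if_pos hqi, coeff_Dser, if_neg]
          push_neg
          refine ⟨j0, ?_⟩
          rw [Finsupp.tsub_apply]
          by_cases hji : j0 = i
          · subst hji
            simp only [Finsupp.single_eq_same]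
            intro hc
            apply hj0
            have := Nat.dvd_add hc (dvd_refl q)
            rwa [Nat.sub_add_cancel hqi] at this
          · rwa [Finsupp.single_eq_of_ne hji, Nat.sub_zero]
        · rw [if_neg hqi]

lemma multinomial_const (n k : ℕ) :
    Nat.multinomial (Finset.univ : Finset (Fin n)) (fun _ => k)
      = (k * n).factorial / (k.factorial) ^ n := by
  rw [Nat.multinomial]
  simp [Finset.sum_const, Finset.prod_const, Finset.card_univ, Nat.mul_comm]

end Aux

/-- The diagonal coefficients of `1/(1 − x_1 − ⋯ − x_n)` are the multinomial
numbers `(kn)!/(k!)^n`: if `A` is the power series expansion of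
`1/(1 − x_1 − ⋯ − x_n)`, then the coefficient of `(x_1⋯x_n)^k` in `A` equals
`(kn)!/(k!)^n`; consequently (by the multivariate Lucas property) for every
prime `p`, all `k ≥ 0` and `0 ≤ l ≤ p-1`,
`((kp+l)n)!/((kp+l)!)^n ≡ ((kn)!/(k!)^n)·((ln)!/(l!)^n) (mod p)`. -/
theorem diagonal_multinomial_and_lucas (n : ℕ) (hn : 1 ≤ n) :
    (∀ (A : MvPowerSeries (Fin n) ℤ),
      ((1 - ∑ i : Fin n, MvPolynomial.X i : MvPolynomial (Fin n) ℤ) :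
          MvPowerSeries (Fin n) ℤ) * A = 1 →
      ∀ k : ℕ,
        MvPowerSeries.coeff (Finsupp.equivFunOnFinite.symm fun _ : Fin n => k) A
          = (((k * n).factorial / (k.factorial) ^ n : ℕ) : ℤ)) ∧
    (∀ (p : ℕ), p.Prime → ∀ k l : ℕ, l ≤ p - 1 →
      ((k * p + l) * n).factorial / ((k * p + l).factorial) ^ n ≡
        ((k * n).factorial / (k.factorial) ^ n) *
        ((l * n).factorial / (l.factorial) ^ n) [MOD p]) := by
  constructor
  · -- Part 1
    intro A hA k
    have hB := Dser_inv n ℤ 1 one_pos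
    have hcast : ((1 - ∑ i : Fin n, MvPolynomial.X i : MvPolynomial (Fin n) ℤ) :
        MvPowerSeries (Fin n) ℤ) = 1 - ∑ i : Fin n, MvPowerSeries.X i ^ 1 := by
      rw [← MvPolynomial.coeToMvPowerSeries.ringHom_apply, map_sub, map_one, map_sum]
      simp [MvPolynomial.coeToMvPowerSeries.ringHom_apply, MvPolynomial.coe_X]
    rw [hcast] at hA
    have hAB : A = Dser n ℤ 1 := by
      calc A = 1 * A := (one_mul A).symm
        _ = ((1 - ∑ i : Fin n, MvPowerSeries.X i ^ 1) * Dser n ℤ 1) * A := by rw [hB]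
        _ = Dser n ℤ 1 * ((1 - ∑ i : Fin n, MvPowerSeries.X i ^ 1) * A) := by ring
        _ = Dser n ℤ 1 * 1 := by rw [hA]
        _ = Dser n ℤ 1 := mul_one _
    rw [hAB, coeff_Dser, if_pos (fun i => one_dvd _)]
    have h1 : (fun i : Fin n =>
        (Finsupp.equivFunOnFinite.symm fun _ : Fin n => k) i / 1) = fun _ : Fin n => k := by
      funext i; simp
    rw [h1, multinomial_const]
  · -- Part 2
    intro p hp k l hl
    haveI : Fact p.Prime := ⟨hp⟩
    haveI : Fact (1 < p) := ⟨hp.one_lt⟩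
    have hp1 : 0 < p := hp.pos
    have hlp : l < p := by omega
    haveI hch : CharP (MvPowerSeries (Fin n) (ZMod p)) p := by
      have hinj : Function.Injective ((MvPowerSeries.C (σ := Fin n) (R := ZMod p))) := by
        intro a b hab
        have := congrArg ((MvPowerSeries.constantCoeff (σ := Fin n) (R := ZMod p))) hab
        simpa using this
      exact charP_of_injective_ringHom hinj p
    set F := ZMod p with hF
    set s : MvPowerSeries (Fin n) F := ∑ i : Fin n, MvPowerSeries.X i with hs
    have hB : (1 - s) * Dser n F 1 = 1 := by
      have h := Dser_inv n F 1 one_pos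
      simpa [hs] using h
    have hC : (1 - ∑ i : Fin n, MvPowerSeries.X i ^ p) * Dser n F p = 1 := Dser_inv n F p hp1
    have hfrob : (1 - s) ^ p = 1 - ∑ i : Fin n, MvPowerSeries.X i ^ p := by
      rw [sub_pow_char, one_pow, hs, sum_pow_char]
    have h2 : (1 - s) * ((1 - s) ^ (p - 1) * Dser n F p) = 1 := by
      rw [← mul_assoc]
      have h3 : (1 - s) * (1 - s) ^ (p - 1) = (1 - s) ^ p := by
        have h4 := pow_succ (1 - s) (p - 1)
        rw [show p - 1 + 1 = p from by omega] at h4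
        rw [h4, mul_comm]
      rw [h3, hfrob, hC]
    have hBC : Dser n F 1 = (1 - s) ^ (p - 1) * Dser n F p := by
      calc Dser n F 1 = Dser n F 1 * ((1 - s) * ((1 - s) ^ (p - 1) * Dser n F p)) := by
            rw [h2, mul_one]
        _ = ((1 - s) * Dser n F 1) * ((1 - s) ^ (p - 1) * Dser n F p) := by ring
        _ = (1 - s) ^ (p - 1) * Dser n F p := by rw [hB, one_mul]
    -- coefficient of (1-s)^(p-1) vanishes above total degree p-1
    have hvanish : ∀ u : Fin n →₀ ℕ, (∃ i, p ≤ u i) →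
        MvPowerSeries.coeff u ((1 - s) ^ (p - 1)) = 0 := by
      intro u ⟨i, hi⟩
      have hpoly : (((1 - ∑ j : Fin n, MvPolynomial.X j : MvPolynomial (Fin n) F) ^ (p - 1) :
          MvPolynomial (Fin n) F) : MvPowerSeries (Fin n) F) = (1 - s) ^ (p - 1) := by
        rw [← MvPolynomial.coeToMvPowerSeries.ringHom_apply, map_pow, map_sub, map_one, map_sum]
        simp [MvPolynomial.coeToMvPowerSeries.ringHom_apply, MvPolynomial.coe_X, hs]
      rw [← hpoly, MvPolynomial.coeff_coe]
      apply MvPolynomial.coeff_eq_zero_of_totalDegree_lt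
      have hdeg1 : (1 - ∑ j : Fin n, MvPolynomial.X j : MvPolynomial (Fin n) F).totalDegree
          ≤ 1 := by
        refine le_trans (MvPolynomial.totalDegree_sub _ _) (max_le ?_ ?_)
        · simp [MvPolynomial.totalDegree_one]
        · refine le_trans (MvPolynomial.totalDegree_finset_sum _ _) (Finset.sup_le ?_)
          intro j _
          rw [MvPolynomial.totalDegree_X]
      have hdeg : ((1 - ∑ j : Fin n, MvPolynomial.X j : MvPolynomial (Fin n) F) ^ (p - 1)
          : MvPolynomial (Fin n) F).totalDegree ≤ p - 1 := by
        refine le_trans (MvPolynomial.totalDegree_pow _ _) ?_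
        calc (p - 1) * (1 - ∑ j : Fin n, MvPolynomial.X j :
              MvPolynomial (Fin n) F).totalDegree ≤ (p - 1) * 1 :=
            Nat.mul_le_mul_left _ hdeg1
          _ = p - 1 := Nat.mul_one _
      have hsupp : i ∈ u.support := Finsupp.mem_support_iff.mpr (by omega)
      have hsum : p ≤ ∑ j ∈ u.support, u j :=
        le_trans hi (Finset.single_le_sum (fun j _ => Nat.zero_le _) hsupp)
      omega
    -- key extraction
    have key : ∀ k' : ℕ,
        MvPowerSeries.coeff
            (Finsupp.equivFunOnFinite.symm fun _ : Fin n => k' * p + l) (Dser n F 1)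
          = MvPowerSeries.coeff
              (Finsupp.equivFunOnFinite.symm fun _ : Fin n => l) ((1 - s) ^ (p - 1))
            * ((Nat.multinomial Finset.univ fun _ : Fin n => k' : ℕ) : F) := by
      intro k'
      classical
      rw [hBC, MvPowerSeries.coeff_mul]
      rw [Finset.sum_eq_single ((Finsupp.equivFunOnFinite.symm fun _ : Fin n => l),
          (Finsupp.equivFunOnFinite.symm fun _ : Fin n => k' * p))]
      · congr 1
        rw [coeff_Dser, if_pos]
        · congr 1
          have h4 : (fun i : Fin n =>
              (Finsupp.equivFunOnFinite.symm fun _ : Fin n => k' * p) i / p)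
              = fun _ : Fin n => k' := by
            funext i
            simp [Nat.mul_div_cancel _ hp1]
          rw [h4]
        · intro i
          simp [Dvd.intro]
      · rintro ⟨u, v⟩ huv hne
        rw [HasAntidiagonal.mem_antidiagonal] at huv
        have h5 : ∀ i, u i + v i = k' * p + l := by
          intro i
          have := DFunLike.congr_fun huv i
          simpa using this
        by_cases hv : ∀ i, p ∣ v i
        · by_cases hveq : v = Finsupp.equivFunOnFinite.symm fun _ : Fin n => k' * p
          · exfalso
            apply hne
            have hu : u = Finsupp.equivFunOnFinite.symm fun _ : Fin n => l := by
              ext i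
              have h6 := h5 i
              rw [hveq] at h6
              simp only [Finsupp.coe_equivFunOnFinite_symm] at h6 ⊢
              omega
            rw [hu, hveq]
          · have hex : ∃ i, p ≤ u i := by
              obtain ⟨i, hvi⟩ := Finsupp.ne_iff.mp hveq
              simp only [Finsupp.coe_equivFunOnFinite_symm] at hvi
              obtain ⟨w, hw⟩ := hv i
              have hw' : v i = w * p := by rw [hw]; ring
              refine ⟨i, ?_⟩
              have h6 : u i + w * p = k' * p + l := by rw [← hw']; exact h5 i
              rcases Nat.lt_or_ge w k' with hwk | hwk
              · have h7 : (w + 1) * p ≤ k' * p := Nat.mul_le_mul_right p (by omega)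
                have h8 : w * p + p ≤ k' * p := by
                  have : (w + 1) * p = w * p + p := by ring
                  omega
                linarith
              · have hwne : w ≠ k' := by
                  intro hc
                  apply hvi
                  rw [hw', hc]
                have h7 : (k' + 1) * p ≤ w * p := Nat.mul_le_mul_right p (by omega)
                have h8 : k' * p + p ≤ w * p := by
                  have : (k' + 1) * p = k' * p + p := by ring
                  omega
                exfalso
                linarith [h5 i, hw']
            rw [hvanish u hex, zero_mul]
        · have h9 : MvPowerSeries.coeff v (Dser n F p) = 0 := by
            rw [coeff_Dser, if_neg hv]
          rw [h9, mul_zero]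
      · intro hmem
        exfalso
        apply hmem
        rw [HasAntidiagonal.mem_antidiagonal]
        ext i
        simp only [Finsupp.add_apply, Finsupp.coe_equivFunOnFinite_symm]
        omega
    have hBcoeff : ∀ m : ℕ,
        MvPowerSeries.coeff (Finsupp.equivFunOnFinite.symm fun _ : Fin n => m) (Dser n F 1)
          = ((Nat.multinomial Finset.univ fun _ : Fin n => m : ℕ) : F) := by
      intro m
      rw [coeff_Dser, if_pos (fun i => one_dvd _)]
      congr 1
      have h1 : (fun i : Fin n =>
          (Finsupp.equivFunOnFinite.symm fun _ : Fin n => m) i / 1) = fun _ : Fin n => m := by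
        funext i; simp
      rw [h1]
    have e1 := key k
    have e0 := key 0
    rw [hBcoeff] at e1
    have h0 : (0 : ℕ) * p + l = l := by omega
    rw [h0, hBcoeff] at e0
    have hm0 : (Nat.multinomial Finset.univ fun _ : Fin n => (0 : ℕ)) = 1 := by
      rw [multinomial_const]
      simp
    rw [hm0] at e0
    simp only [Nat.cast_one, mul_one] at e0
    rw [← e0] at e1
    -- e1 : cast (mult (k*p+l)) = cast (mult l) * cast (mult k)
    have efinal : ((Nat.multinomial Finset.univ fun _ : Fin n => k * p + l : ℕ) : ZMod p)
        = (((Nat.multinomial Finset.univ fun _ : Fin n => k)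
            * (Nat.multinomial Finset.univ fun _ : Fin n => l) : ℕ) : ZMod p) := by
      push_cast
      rw [e1]
      ring
    rw [ZMod.natCast_eq_natCast_iff] at efinal
    simpa only [multinomial_const] using efinal
end
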